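/- arXiv:2504.17136 — 3 statements merged into one kernel-verified Lean document; each statement's English description precedes it below -/
import Mathlib

section
/- Let γ > 1 and let ρ̄, ρ̂ be constants with 0 < ρ̄ ≤ ρ̂. Then there exists a constant C̃ ∈ (0,1), depending only on γ, ρ̄ and ρ̂, such that for every ρ ∈ [0, 2ρ̂]: C̃² (ρ − ρ̄)² ≤ C̃ G(ρ) and C̃ G(ρ) ≤ (ρ^γ − ρ̄^γ)(ρ − ρ̄). -/
noncomputable section

/-- The potential energy density `G(ρ)` relative to the reference density `ρ̄`:
`G(ρ) = (ρ^γ − ρ̄^γ − γ ρ̄^(γ−1) (ρ − ρ̄)) / (γ − 1)`. -/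
def Gfun (γ ρbar r : ℝ) : ℝ :=
  (Real.rpow r γ - Real.rpow ρbar γ - γ * Real.rpow ρbar (γ - 1) * (r - ρbar)) / (γ - 1)

/-- Tangent-line (Bernoulli) inequality for `x ^ γ`, `γ ≥ 1`. -/
private lemma bern_tangent {γ : ℝ} (hγ : 1 ≤ γ) {a b : ℝ} (ha : 0 ≤ a) (hb : 0 < b) :
    b ^ γ + γ * b ^ (γ - 1) * (a - b) ≤ a ^ γ := by
  have hs : -1 ≤ a / b - 1 := by
    have : 0 ≤ a / b := div_nonneg ha hb.le
    linarith
  have h := one_add_mul_self_le_rpow_one_add hs hγ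
  have h1 : (1 : ℝ) + (a / b - 1) = a / b := by ring
  rw [h1, Real.div_rpow ha hb.le] at h
  have hbγ : (0 : ℝ) < b ^ γ := Real.rpow_pos_of_pos hb γ
  have h2 : (1 + γ * (a / b - 1)) * b ^ γ ≤ a ^ γ := by
    rw [← le_div_iff₀ hbγ]
    exact h
  have h3 : b ^ γ = b ^ (γ - 1) * b := by
    rw [show γ = γ - 1 + 1 by ring, Real.rpow_add hb, Real.rpow_one]
    ring_nf
  rw [h3] at h2 ⊢
  have hb' : b ≠ 0 := hb.ne'
  calc b ^ (γ - 1) * b + γ * b ^ (γ - 1) * (a - b)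
      = (1 + γ * (a / b - 1)) * (b ^ (γ - 1) * b) := by field_simp
    _ ≤ a ^ γ := h2

/-- Lower bound for differences of powers with exponent `p > 0` on a compact interval
away from `0`. -/
private lemma pow_diff_lower {p δ M : ℝ} (hp : 0 < p) (hδ : 0 < δ) (hM : δ ≤ M) :
    ∃ κ : ℝ, 0 < κ ∧ ∀ x y : ℝ, δ ≤ y → y ≤ x → x ≤ M →
      κ * (x - y) ≤ x ^ p - y ^ p := by
  rcases le_or_gt 1 p with h1 | h1
  · refine ⟨δ ^ (p - 1), Real.rpow_pos_of_pos hδ _, fun x y hy hxy hxM => ?_⟩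
    have hy0 : 0 < y := lt_of_lt_of_le hδ hy
    have hx0 : 0 < x := lt_of_lt_of_le hy0 hxy
    have e1 : δ ^ (p - 1) ≤ y ^ (p - 1) :=
      Real.rpow_le_rpow hδ.le hy (by linarith)
    have e2 : y ^ (p - 1) ≤ x ^ (p - 1) :=
      Real.rpow_le_rpow hy0.le hxy (by linarith)
    have hxp : x ^ p = x ^ (p - 1) * x := by
      rw [show p = p - 1 + 1 by ring, Real.rpow_add hx0, Real.rpow_one]; ring_nf
    have hyp : y ^ p = y ^ (p - 1) * y := by
      rw [show p = p - 1 + 1 by ring, Real.rpow_add hy0, Real.rpow_one]; ring_nf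
    rw [hxp, hyp]
    nlinarith [sub_nonneg.mpr hxy]
  · refine ⟨p * M ^ (p - 1), mul_pos hp (Real.rpow_pos_of_pos (hδ.trans_le hM) _),
      fun x y hy hxy hxM => ?_⟩
    have hy0 : 0 < y := lt_of_lt_of_le hδ hy
    have hx0 : 0 < x := lt_of_lt_of_le hy0 hxy
    have hM0 : 0 < M := hδ.trans_le hM
    have hs : -1 ≤ y / x - 1 := by
      have : 0 ≤ y / x := div_nonneg hy0.le hx0.le
      linarith
    have h := rpow_one_add_le_one_add_mul_self hs hp.le h1.le
    have h1' : (1 : ℝ) + (y / x - 1) = y / x := by ring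
    rw [h1', Real.div_rpow hy0.le hx0.le] at h
    have hxγ : (0 : ℝ) < x ^ p := Real.rpow_pos_of_pos hx0 p
    have h2 : y ^ p ≤ (1 + p * (y / x - 1)) * x ^ p := by
      rw [div_le_iff₀ hxγ] at h
      linarith
    have h3 : x ^ p = x ^ (p - 1) * x := by
      rw [show p = p - 1 + 1 by ring, Real.rpow_add hx0, Real.rpow_one]; ring_nf
    have htan : y ^ p ≤ x ^ p + p * x ^ (p - 1) * (y - x) := by
      rw [h3] at h2 ⊢
      have hx' : x ≠ 0 := hx0.ne'
      calc y ^ p ≤ (1 + p * (y / x - 1)) * (x ^ (p - 1) * x) := h2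
        _ = x ^ (p - 1) * x + p * x ^ (p - 1) * (y - x) := by field_simp
    have hmono : M ^ (p - 1) ≤ x ^ (p - 1) := by
      have e1 : x ^ (1 - p) ≤ M ^ (1 - p) :=
        Real.rpow_le_rpow hx0.le hxM (by linarith)
      have ex : x ^ (p - 1) = (x ^ (1 - p))⁻¹ := by
        rw [← Real.rpow_neg hx0.le]; ring_nf
      have eM : M ^ (p - 1) = (M ^ (1 - p))⁻¹ := by
        rw [← Real.rpow_neg hM0.le]; ring_nf
      rw [ex, eM]
      exact inv_anti₀ (Real.rpow_pos_of_pos hx0 _) e1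
    have hxyn : 0 ≤ x - y := sub_nonneg.mpr hxy
    nlinarith [mul_le_mul_of_nonneg_right hmono hxyn]

/-- Pointwise equivalence between `G(ρ)` and `(ρ − ρ̄)²`, and the upper bound by
`(ρ^γ − ρ̄^γ)(ρ − ρ̄)`, on `[0, 2ρ̂]`. -/
theorem G_equiv_quadratic (γ ρbar ρhat : ℝ) (hγ : 1 < γ)
    (hρbar : 0 < ρbar) (hle : ρbar ≤ ρhat) :
    ∃ Ct : ℝ, 0 < Ct ∧ Ct < 1 ∧
      ∀ r : ℝ, 0 ≤ r → r ≤ 2 * ρhat →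
        Ct ^ 2 * (r - ρbar) ^ 2 ≤ Ct * Gfun γ ρbar r ∧
        Ct * Gfun γ ρbar r ≤ (Real.rpow r γ - Real.rpow ρbar γ) * (r - ρbar) := by
  have hrpow : ∀ a b : ℝ, Real.rpow a b = a ^ b := fun _ _ => rfl
  have hγ0 : (0 : ℝ) < γ := by linarith
  have hγ1 : (0 : ℝ) < γ - 1 := by linarith
  have hρhat : (0 : ℝ) < ρhat := lt_of_lt_of_le hρbar hle
  obtain ⟨κ, hκ0, hκ⟩ := pow_diff_lower (p := γ - 1) (δ := ρbar / 2) (M := 2 * ρhat)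
    hγ1 (by linarith) (by linarith)
  set C1 : ℝ := (γ - 1) * ρbar / γ with hC1
  set C2 : ℝ := γ * κ / (4 * (γ - 1)) with hC2
  have hC1pos : 0 < C1 := by rw [hC1]; positivity
  have hC2pos : 0 < C2 := by rw [hC2]; positivity
  set Ct : ℝ := min 1 (min C1 C2) / 2 with hCt
  have hmin1 : min 1 (min C1 C2) ≤ 1 := min_le_left _ _
  have hminpos : 0 < min 1 (min C1 C2) := by
    apply lt_min one_pos (lt_min hC1pos hC2pos)
  have hCt0 : 0 < Ct := by rw [hCt]; linarith
  have hCtC1 : Ct ≤ C1 := by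
    have h := (min_le_right 1 (min C1 C2)).trans (min_le_left C1 C2)
    rw [hCt]; linarith
  have hCtC2 : Ct ≤ C2 := by
    have h := (min_le_right 1 (min C1 C2)).trans (min_le_right C1 C2)
    rw [hCt]; linarith
  refine ⟨Ct, hCt0, by rw [hCt]; linarith, ?_⟩
  intro r hr0 hr2
  have hne : γ - 1 ≠ 0 := hγ1.ne'
  have hG : (γ - 1) * Gfun γ ρbar r
      = r ^ γ - ρbar ^ γ - γ * ρbar ^ (γ - 1) * (r - ρbar) := by
    unfold Gfun
    rw [hrpow, hrpow, hrpow]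
    field_simp
  -- lower bound
  have hm0 : (0 : ℝ) < (r + ρbar) / 2 := by linarith
  have b1 := bern_tangent hγ.le hr0 hm0
  have b2 := bern_tangent hγ.le hm0.le hρbar
  have key_low : γ * κ / 4 * (r - ρbar) ^ 2 ≤ (γ - 1) * Gfun γ ρbar r := by
    rw [hG]
    rcases le_total ρbar r with hcase | hcase
    · have hk := hκ ((r + ρbar) / 2) ρbar (by linarith) (by linarith) (by linarith)
      have h4 := mul_le_mul_of_nonneg_right
        (mul_le_mul_of_nonneg_left hk hγ0.le) (by linarith : (0:ℝ) ≤ r - ρbar)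
      linarith [b1, b2, h4]
    · have hk := hκ ρbar ((r + ρbar) / 2) (by linarith) (by linarith) (by linarith)
      have h4 := mul_le_mul_of_nonneg_right
        (mul_le_mul_of_nonneg_left hk hγ0.le) (by linarith : (0:ℝ) ≤ ρbar - r)
      linarith [b1, b2, h4]
  -- upper bound pieces
  have key_up : (γ - 1) * Gfun γ ρbar r
      ≤ γ * (r ^ (γ - 1) - ρbar ^ (γ - 1)) * (r - ρbar) := by
    rw [hG]
    rcases eq_or_lt_of_le hr0 with h0 | h0
    · rw [← h0, Real.zero_rpow hγ0.ne', Real.zero_rpow hne]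
      have := Real.rpow_nonneg hρbar.le γ
      linarith
    · have hb := bern_tangent hγ.le hρbar.le h0
      nlinarith [hb]
  have hup2 : ρbar * (r ^ (γ - 1) - ρbar ^ (γ - 1)) * (r - ρbar)
      ≤ (r ^ γ - ρbar ^ γ) * (r - ρbar) := by
    have h1 : r ^ γ = r ^ (γ - 1) * r := by
      rw [show γ = (γ - 1) + 1 by ring, Real.rpow_add' hr0 (by simpa using hγ0.ne')]
      rw [Real.rpow_one]
      ring_nf
    have h2 : ρbar ^ γ = ρbar ^ (γ - 1) * ρbar := by
      rw [show γ = (γ - 1) + 1 by ring, Real.rpow_add' hρbar.le (by simpa using hγ0.ne')]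
      rw [Real.rpow_one]
      ring_nf
    rw [h1, h2]
    linarith [mul_nonneg (Real.rpow_nonneg hr0 (γ - 1)) (sq_nonneg (r - ρbar))]
  have hGnn : 0 ≤ Gfun γ ρbar r := by
    have h0' : (γ - 1) * 0 ≤ (γ - 1) * Gfun γ ρbar r := by
      rw [mul_zero]
      exact le_trans (by positivity) key_low
    exact le_of_mul_le_mul_left h0' hγ1
  constructor
  · -- first inequality
    have hCt2 : Ct * (γ - 1) ≤ γ * κ / 4 := by
      have h := mul_le_mul_of_nonneg_right hCtC2 hγ1.le
      have he : C2 * (γ - 1) = γ * κ / 4 := by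
        rw [hC2]; field_simp
      linarith [he ▸ h]
    have h5 : Ct * (r - ρbar) ^ 2 ≤ Gfun γ ρbar r := by
      have hA := mul_le_mul_of_nonneg_right hCt2 (sq_nonneg (r - ρbar))
      have hfin : (γ - 1) * (Ct * (r - ρbar) ^ 2) ≤ (γ - 1) * Gfun γ ρbar r := by
        linarith [hA, key_low]
      exact le_of_mul_le_mul_left hfin hγ1
    calc Ct ^ 2 * (r - ρbar) ^ 2 = Ct * (Ct * (r - ρbar) ^ 2) := by ring
      _ ≤ Ct * Gfun γ ρbar r := mul_le_mul_of_nonneg_left h5 hCt0.le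
  · -- second inequality
    rw [hrpow, hrpow]
    have h6 : Ct * Gfun γ ρbar r ≤ C1 * Gfun γ ρbar r :=
      mul_le_mul_of_nonneg_right hCtC1 hGnn
    have h7 : C1 * Gfun γ ρbar r = (ρbar / γ) * ((γ - 1) * Gfun γ ρbar r) := by
      rw [hC1]; field_simp
    have h8 : (ρbar / γ) * ((γ - 1) * Gfun γ ρbar r)
        ≤ (ρbar / γ) * (γ * (r ^ (γ - 1) - ρbar ^ (γ - 1)) * (r - ρbar)) :=
      mul_le_mul_of_nonneg_left key_up (by positivity)
    have h9 : (ρbar / γ) * (γ * (r ^ (γ - 1) - ρbar ^ (γ - 1)) * (r - ρbar))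
        = ρbar * (r ^ (γ - 1) - ρbar ^ (γ - 1)) * (r - ρbar) := by
      field_simp
    linarith [h6, h7 ▸ h6, h8, h9 ▸ h8, hup2]
end
end

section
/- Let γ > 1 and let ρ̄, ρ̂ be constants with 0 < ρ̄ ≤ ρ̂. Let Ω ⊂ ℝ³ be a bounded measurable set of positive Lebesgue measure and let ρ : Ω → [0, 2ρ̂] be measurable. Let P̄ = (1/|Ω|)∫_Ω ρ(x)^γ dx denote the average of the pressure. Then there exists a constant C > 0, depending only on γ, ρ̄ and ρ̂, such that ∫_Ω (ρ(x)^γ − P̄)² dx ≤ C ∫_Ω G(ρ(x)) dx. -/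
/-! The average minimises `a ↦ ∫_Ω (ρ^γ - a)²`, so it suffices to bound `(r^γ - ρ̄^γ)²` by a
multiple of `G(r)` for `r ∈ [0, 2ρ̂]`; here `(γ - 1) G` is the Bregman divergence
`r^γ - ρ̄^γ - γ ρ̄^(γ-1) (r - ρ̄)` of `s ↦ s^γ` at `ρ̄`. Since `s ↦ s^γ` is Lipschitz on
`[0, 2ρ̂]`, `(r^γ - ρ̄^γ)² ≲ (r - ρ̄)²`. On `[ρ̄/2, 2ρ̂]` the second derivative `γ(γ-1) s^(γ-2)`
is bounded below, so the divergence dominates `(r - ρ̄)²`; on `[0, ρ̄/2]`, where that lower bound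
fails for `γ > 2`, the divergence is decreasing, hence at least its value at `ρ̄/2`, while
`(r - ρ̄)² ≤ ρ̄²`. -/

open MeasureTheory Real Set

noncomputable section

section BregmanLowerBound

variable {f f' : ℝ → ℝ} {a b c m : ℝ}

lemma hasDerivAt_bregman_sub_sq {x : ℝ} (hx : HasDerivAt f (f' x) x) :
    HasDerivAt (fun y => f y - f c - f' c * (y - c) - m / 2 * (y - c) ^ 2)
      (f' x - f' c - m * (x - c)) x := by
  have hlin := ((hasDerivAt_id' x).sub_const c).const_mul (f' c)
  have hsq := (((hasDerivAt_id' x).sub_const c).fun_pow 2).const_mul (m / 2)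
  refine (((hx.sub_const (f c)).sub hlin).sub hsq).congr_deriv ?_
  push_cast
  ring

lemma antitoneOn_bregman_sub_sq (hf : ∀ x ∈ Icc a b, HasDerivAt f (f' x) x)
    (hf' : ∀ x ∈ Icc a b, ∀ y ∈ Icc a b, x ≤ y → m * (y - x) ≤ f' y - f' x) (hcb : c ≤ b) :
    AntitoneOn (fun y => f y - f c - f' c * (y - c) - m / 2 * (y - c) ^ 2) (Icc a c) := by
  have hd (x) (hx : x ∈ Icc a c) :=
    hasDerivAt_bregman_sub_sq (c := c) (m := m) (hf x ⟨hx.1, hx.2.trans hcb⟩)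
  refine antitoneOn_of_deriv_nonpos (convex_Icc a c)
    (fun x hx => (hd x hx).continuousAt.continuousWithinAt)
    (fun x hx => (hd x (interior_subset hx)).differentiableAt.differentiableWithinAt)
    fun x hx => ?_
  rw [interior_Icc] at hx
  rw [(hd x (Ioo_subset_Icc_self hx)).deriv]
  have := hf' x ⟨hx.1.le, hx.2.le.trans hcb⟩ c ⟨hx.1.le.trans hx.2.le, hcb⟩ hx.2.le
  linarith

lemma monotoneOn_bregman_sub_sq (hf : ∀ x ∈ Icc a b, HasDerivAt f (f' x) x)
    (hf' : ∀ x ∈ Icc a b, ∀ y ∈ Icc a b, x ≤ y → m * (y - x) ≤ f' y - f' x) (hac : a ≤ c) :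
    MonotoneOn (fun y => f y - f c - f' c * (y - c) - m / 2 * (y - c) ^ 2) (Icc c b) := by
  have hd (x) (hx : x ∈ Icc c b) :=
    hasDerivAt_bregman_sub_sq (c := c) (m := m) (hf x ⟨hac.trans hx.1, hx.2⟩)
  refine monotoneOn_of_deriv_nonneg (convex_Icc c b)
    (fun x hx => (hd x hx).continuousAt.continuousWithinAt)
    (fun x hx => (hd x (interior_subset hx)).differentiableAt.differentiableWithinAt)
    fun x hx => ?_
  rw [interior_Icc] at hx
  rw [(hd x (Ioo_subset_Icc_self hx)).deriv]
  have := hf' c ⟨hac, hx.1.le.trans hx.2.le⟩ x ⟨hac.trans hx.1.le, hx.2.le⟩ hx.1.le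
  linarith

lemma mul_sq_le_bregman (hf : ∀ x ∈ Icc a b, HasDerivAt f (f' x) x)
    (hf' : ∀ x ∈ Icc a b, ∀ y ∈ Icc a b, x ≤ y → m * (y - x) ≤ f' y - f' x)
    (hc : c ∈ Icc a b) {r : ℝ} (hr : r ∈ Icc a b) :
    m / 2 * (r - c) ^ 2 ≤ f r - f c - f' c * (r - c) := by
  rcases le_total r c with hrc | hcr
  · have := antitoneOn_bregman_sub_sq hf hf' hc.2 ⟨hr.1, hrc⟩ ⟨hc.1, le_rfl⟩ hrc
    simp only [sub_self, mul_zero, zero_pow two_ne_zero] at this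
    linarith
  · have := monotoneOn_bregman_sub_sq hf hf' hc.1 ⟨le_rfl, hc.2⟩ ⟨hcr, hr.2⟩ hcr
    simp only [sub_self, mul_zero, zero_pow two_ne_zero] at this
    linarith

end BregmanLowerBound

lemma mul_sub_le_rpow_sub_rpow {q lo hi x y : ℝ} (hq : 0 ≤ q) (hlo : 0 < lo)
    (hx : x ∈ Icc lo hi) (hy : y ∈ Icc lo hi) (hxy : x ≤ y) :
    q * min (lo ^ (q - 1)) (hi ^ (q - 1)) * (y - x) ≤ y ^ q - x ^ q := by
  have hd : ∀ s ∈ Icc lo hi, HasDerivAt (fun s => s ^ q) (q * s ^ (q - 1)) s :=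
    fun s hs => hasDerivAt_rpow_const (Or.inl (hlo.trans_le hs.1).ne')
  refine (convex_Icc lo hi).mul_sub_le_image_sub_of_le_deriv
    (fun s hs => (hd s hs).continuousAt.continuousWithinAt)
    (fun s hs => (hd s (interior_subset hs)).differentiableAt.differentiableWithinAt)
    (fun s hs => ?_) x hx y hy hxy
  rw [interior_Icc] at hs
  rw [(hd s (Ioo_subset_Icc_self hs)).deriv]
  gcongr
  rcases le_total 0 (q - 1) with h | h
  · exact (min_le_left _ _).trans (rpow_le_rpow hlo.le hs.1.le h)
  · exact (min_le_right _ _).trans (rpow_le_rpow_of_nonpos (hlo.trans hs.1) hs.2.le h)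

lemma abs_rpow_sub_rpow_le {γ M x y : ℝ} (hγ : 1 ≤ γ) (hx : x ∈ Icc 0 M) (hy : y ∈ Icc 0 M) :
    |x ^ γ - y ^ γ| ≤ γ * M ^ (γ - 1) * |x - y| := by
  refine (convex_Icc 0 M).norm_image_sub_le_of_norm_hasDerivWithin_le (f := fun s => s ^ γ)
    (fun s _ => (hasDerivAt_rpow_const (Or.inr hγ)).hasDerivWithinAt) (fun s hs => ?_) hy hx
  rw [norm_eq_abs, abs_of_nonneg (by have := hs.1; positivity)]
  gcongr
  exacts [hs.1, hs.2]

lemma sq_sub_le_mul_rpow_bregman {γ c M : ℝ} (hγ : 1 < γ) (hc : 0 < c) (hcM : c ≤ M) :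
    ∃ K > 0, ∀ r ∈ Icc 0 M,
      (r - c) ^ 2 ≤ K * (r ^ γ - c ^ γ - γ * c ^ (γ - 1) * (r - c)) := by
  set m := γ * ((γ - 1) * min ((c / 2) ^ (γ - 1 - 1)) (M ^ (γ - 1 - 1)))
  have hm : 0 < m := by
    have : 0 < min ((c / 2) ^ (γ - 1 - 1)) (M ^ (γ - 1 - 1)) :=
      lt_min (by positivity) (by have := hc.trans_le hcM; positivity)
    have : 0 < γ - 1 := by linarith
    positivity
  have hf : ∀ x ∈ Icc 0 M, HasDerivAt (· ^ γ) (γ * x ^ (γ - 1)) x :=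
    fun x _ => hasDerivAt_rpow_const (Or.inr hγ.le)
  have hstrong : ∀ r ∈ Icc (c / 2) M,
      m / 2 * (r - c) ^ 2 ≤ r ^ γ - c ^ γ - γ * c ^ (γ - 1) * (r - c) := by
    refine fun r hr => mul_sq_le_bregman (a := c / 2) (b := M)
      (fun x hx => hf x ⟨by linarith [hx.1], hx.2⟩) (fun x hx y hy hxy => ?_) ⟨by linarith, hcM⟩ hr
    have := mul_sub_le_rpow_sub_rpow (q := γ - 1) (by linarith) (by positivity) hx hy hxy
    nlinarith
  refine ⟨8 / m, by positivity, fun r hr => ?_⟩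
  rw [div_mul_eq_mul_div, le_div_iff₀ hm]
  rcases le_total (c / 2) r with hr' | hr'
  · have := hstrong r ⟨hr', hr.2⟩
    nlinarith [sq_nonneg (r - c)]
  · have hanti := antitoneOn_bregman_sub_sq (m := 0) (a := 0) (b := c)
      (fun x hx => hf x ⟨hx.1, hx.2.trans hcM⟩)
      (fun x hx y hy hxy => by
        have := rpow_le_rpow hx.1 hxy (by linarith : 0 ≤ γ - 1)
        nlinarith) le_rfl ⟨hr.1, hr'.trans (by linarith)⟩ ⟨by positivity, by linarith⟩ hr'
    have := hstrong (c / 2) ⟨le_rfl, by linarith⟩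
    simp only [zero_div, zero_mul, sub_zero] at hanti
    have hrc : (r - c) ^ 2 ≤ c ^ 2 := by nlinarith [hr.1]
    nlinarith [mul_le_mul_of_nonneg_right hrc hm.le]

lemma sq_rpow_sub_rpow_le_mul_Gfun {γ c M : ℝ} (hγ : 1 < γ) (hc : 0 < c) (hcM : c ≤ M) :
    ∃ K > 0, ∀ r ∈ Icc 0 M, (r ^ γ - c ^ γ) ^ 2 ≤ K * Gfun γ c r := by
  obtain ⟨K, hK, hKr⟩ := sq_sub_le_mul_rpow_bregman hγ hc hcM
  have hM : 0 < M := hc.trans_le hcM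
  have hγ1 : 0 < γ - 1 := by linarith
  set L := γ * M ^ (γ - 1)
  refine ⟨L ^ 2 * K * (γ - 1), by positivity, fun r hr => ?_⟩
  calc (r ^ γ - c ^ γ) ^ 2 ≤ (L * |r - c|) ^ 2 := by
        rw [← sq_abs]
        gcongr
        exact abs_rpow_sub_rpow_le hγ.le hr ⟨hc.le, hcM⟩
    _ = L ^ 2 * (r - c) ^ 2 := by rw [mul_pow, sq_abs]
    _ ≤ L ^ 2 * (K * (r ^ γ - c ^ γ - γ * c ^ (γ - 1) * (r - c))) := by
        gcongr
        exact hKr r hr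
    _ = L ^ 2 * K * (γ - 1) * Gfun γ c r := by
        simp only [Gfun, rpow_eq_pow]
        field_simp

lemma continuous_Gfun {γ : ℝ} (hγ : 0 ≤ γ) (c : ℝ) : Continuous (Gfun γ c) :=
  (((continuous_rpow_const hγ).sub continuous_const).sub
    (continuous_const.mul (continuous_id.sub continuous_const))).div_const _

lemma memLp_comp_of_ae_mem {α : Type*} [MeasurableSpace α] {μ : Measure α} [IsFiniteMeasure μ]
    {S : Set ℝ} (hS : IsCompact S) {g : ℝ → ℝ} (hg : Continuous g) {ρ : α → ℝ}
    (hρ : Measurable ρ) (hρS : ∀ᵐ x ∂μ, ρ x ∈ S) (p : ENNReal) :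
    MemLp (fun x => g (ρ x)) p μ := by
  obtain ⟨C, hC⟩ := hS.exists_bound_of_continuousOn hg.continuousOn
  exact .of_bound (hg.measurable.comp hρ).aestronglyMeasurable C (hρS.mono fun x hx => hC _ hx)

section Variance

variable {α : Type*} [MeasurableSpace α] {μ : Measure α} [IsFiniteMeasure μ] {f : α → ℝ}

lemma integral_sub_sq_eq_integral_sub_average_sq_add (hf : MemLp f 2 μ) (a : ℝ) :
    ∫ x, (f x - a) ^ 2 ∂μ
      = ∫ x, (f x - ⨍ y, f y ∂μ) ^ 2 ∂μ + μ.real univ * (⨍ y, f y ∂μ - a) ^ 2 := by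
  set m := ⨍ y, f y ∂μ
  have hsq : Integrable (fun x => (f x - m) ^ 2) μ := (hf.sub (memLp_const m)).integrable_sq
  have hlin : Integrable (fun x => f x - m) μ := (hf.sub (memLp_const m)).integrable one_le_two
  calc ∫ x, (f x - a) ^ 2 ∂μ
      = ∫ x, ((f x - m) ^ 2 + (2 * (m - a) * (f x - m) + (m - a) ^ 2)) ∂μ := by
        congr with x
        ring
    _ = _ := by
        have hrest : Integrable (fun x => 2 * (m - a) * (f x - m) + (m - a) ^ 2) μ :=
          (hlin.const_mul _).add (integrable_const _)
        rw [integral_add hsq hrest, integral_add (hlin.const_mul _) (integrable_const _),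
          integral_const_mul, integral_sub_average, integral_const, smul_eq_mul]
        ring

lemma integral_sub_average_sq_le (hf : MemLp f 2 μ) (a : ℝ) :
    ∫ x, (f x - ⨍ y, f y ∂μ) ^ 2 ∂μ ≤ ∫ x, (f x - a) ^ 2 ∂μ := by
  rw [integral_sub_sq_eq_integral_sub_average_sq_add hf a]
  exact le_add_of_nonneg_right (by positivity)

end Variance

/-- The L² distance of the pressure to its average is controlled by the potential energy. -/
theorem pressure_L2_controlled_by_G (γ ρbar ρhat : ℝ) (hγ : 1 < γ)
    (hρbar : 0 < ρbar) (hle : ρbar ≤ ρhat) :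
    ∃ C > (0:ℝ), ∀ (Ω : Set (EuclideanSpace ℝ (Fin 3))),
      MeasurableSet Ω → Bornology.IsBounded Ω → 0 < volume Ω →
      ∀ ρ : EuclideanSpace ℝ (Fin 3) → ℝ, Measurable ρ →
        (∀ x ∈ Ω, 0 ≤ ρ x ∧ ρ x ≤ 2 * ρhat) →
        (∫ x in Ω, (Real.rpow (ρ x) γ
            - (∫ y in Ω, Real.rpow (ρ y) γ) / (volume Ω).toReal) ^ 2)
          ≤ C * ∫ x in Ω, Gfun γ ρbar (ρ x) := by
  obtain ⟨K, hK, hKr⟩ := sq_rpow_sub_rpow_le_mul_Gfun hγ hρbar (by linarith : ρbar ≤ 2 * ρhat)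
  refine ⟨K, hK, fun Ω hΩ hΩb _ ρ hρ hρΩ => ?_⟩
  have : IsFiniteMeasure (volume.restrict Ω) := isFiniteMeasure_restrict.2 hΩb.measure_lt_top.ne
  have hγ0 : 0 ≤ γ := by linarith
  have hρIcc : ∀ᵐ x ∂volume.restrict Ω, ρ x ∈ Icc 0 (2 * ρhat) := ae_restrict_of_forall_mem hΩ hρΩ
  have hmemLp := memLp_comp_of_ae_mem isCompact_Icc (continuous_rpow_const hγ0) hρ hρIcc 2
  have hGint : Integrable (fun x => Gfun γ ρbar (ρ x)) (volume.restrict Ω) :=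
    memLp_one_iff_integrable.1
      (memLp_comp_of_ae_mem isCompact_Icc (continuous_Gfun hγ0 _) hρ hρIcc 1)
  simp only [rpow_eq_pow]
  calc ∫ x in Ω, (ρ x ^ γ - (∫ y in Ω, ρ y ^ γ) / (volume Ω).toReal) ^ 2
      = ∫ x in Ω, (ρ x ^ γ - ⨍ y in Ω, ρ y ^ γ) ^ 2 := by
        rw [setAverage_eq, measureReal_def, smul_eq_mul, div_eq_inv_mul]
    _ ≤ ∫ x in Ω, (ρ x ^ γ - ρbar ^ γ) ^ 2 := integral_sub_average_sq_le hmemLp _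
    _ ≤ ∫ x in Ω, K * Gfun γ ρbar (ρ x) :=
        setIntegral_mono_on ((hmemLp.sub (memLp_const _)).integrable_sq) (hGint.const_mul K) hΩ
          fun x hx => hKr _ (hρΩ x hx)
    _ = K * ∫ x in Ω, Gfun γ ρbar (ρ x) := integral_const_mul K _
end
end

section
/- Let η > 0, a > 0 and M > 0. Let g : [0,∞) → [0,∞) be measurable with ∫₀^∞ g(τ)² dτ ≤ M. Then there exists a constant C > 0, depending only on η, a and M, such that for all t ≥ 0: ∫₀^t e^{−η(t−τ)} (1 + g(τ)) e^{−aτ} dτ ≤ C ( e^{−ηt/2} + e^{−at/2} ). -/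
open MeasureTheory
set_option maxHeartbeats 2000000

lemma cde_exp_Ioc (c t : ℝ) (hc : 0 < c) (ht : 0 ≤ t) :
    (∫ τ in Set.Ioc (0:ℝ) t, Real.exp (-c * τ)) ≤ 1 / c := by
  rw [← intervalIntegral.integral_of_le ht]
  have h := intervalIntegral.integral_comp_mul_left (f := Real.exp) (a := (0:ℝ)) (b := t)
    (neg_ne_zero.mpr hc.ne')
  simp only [neg_mul] at h ⊢
  rw [h, _root_.integral_exp, smul_eq_mul]
  have h1 : Real.exp (-(c * t)) ≤ 1 := Real.exp_le_one_iff.mpr (by nlinarith)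
  have h0 : 0 < Real.exp (-(c * t)) := Real.exp_pos _
  have : (-c)⁻¹ = -(c⁻¹) := by field_simp
  rw [this]
  simp only [mul_zero, neg_zero, Real.exp_zero]
  rw [one_div]
  nlinarith [inv_pos.mpr hc]

lemma cde_aux_piece (t M I : ℝ) (φ q : ℝ → ℝ) (hφc : Continuous φ)
    (hφ0 : ∀ τ, 0 ≤ φ τ) (hφ1 : ∀ τ ∈ Set.Ioc (0:ℝ) t, φ τ ≤ 1)
    (hq : IntegrableOn q (Set.Ioc 0 t)) (hq0 : ∀ τ, 0 ≤ q τ)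
    (hqM : (∫ τ in Set.Ioc (0:ℝ) t, q τ) ≤ M)
    (hI : (∫ τ in Set.Ioc (0:ℝ) t, φ τ) ≤ I) :
    IntegrableOn (fun τ => φ τ * (3/2 + q τ / 2)) (Set.Ioc 0 t) ∧
    (∫ τ in Set.Ioc (0:ℝ) t, φ τ * (3/2 + q τ / 2)) ≤ 3/2 * I + M/2 := by
  have hφint : IntegrableOn φ (Set.Ioc 0 t) := hφc.integrableOn_Ioc
  have hmeasIoc : MeasurableSet (Set.Ioc (0:ℝ) t) := measurableSet_Ioc
  have hφqmeas : AEStronglyMeasurable (fun τ => φ τ * (q τ / 2))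
      (volume.restrict (Set.Ioc 0 t)) :=
    (hφc.aestronglyMeasurable).mul (hq.div_const 2).aestronglyMeasurable
  have hφqint : IntegrableOn (fun τ => φ τ * (q τ / 2)) (Set.Ioc 0 t) := by
    refine Integrable.mono (hq.div_const 2) hφqmeas ?_
    rw [ae_restrict_iff' hmeasIoc]
    filter_upwards with τ hτ
    have h1 := hφ1 τ hτ
    have h0 := hφ0 τ
    have h2 := hq0 τ
    simp only [Real.norm_eq_abs, abs_of_nonneg (by positivity : (0:ℝ) ≤ φ τ * (q τ / 2)),
      abs_of_nonneg (by positivity : (0:ℝ) ≤ q τ / 2)]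
    nlinarith
  have heq : (fun τ => φ τ * (3/2 + q τ / 2)) = fun τ => 3/2 * φ τ + φ τ * (q τ / 2) := by
    funext τ; ring
  have hint : IntegrableOn (fun τ => φ τ * (3/2 + q τ / 2)) (Set.Ioc 0 t) := by
    rw [heq]; exact (hφint.const_mul (3/2)).add hφqint
  refine ⟨hint, ?_⟩
  rw [heq, integral_add (hφint.const_mul (3/2)) hφqint, integral_const_mul]
  have hb2 : (∫ τ in Set.Ioc (0:ℝ) t, φ τ * (q τ / 2)) ≤ ∫ τ in Set.Ioc (0:ℝ) t, q τ / 2 := by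
    refine setIntegral_mono_on hφqint (hq.div_const 2) hmeasIoc ?_
    intro τ hτ
    have h1 := hφ1 τ hτ
    have h0 := hφ0 τ
    have h2 := hq0 τ
    nlinarith
  rw [integral_div] at hb2
  linarith

/-- A convolution-type decay estimate: if `g ≥ 0` is measurable with `∫₀^∞ g² ≤ M`,
then `∫₀ᵗ e^{−η(t−τ)} (1 + g(τ)) e^{−aτ} dτ ≤ C (e^{−ηt/2} + e^{−at/2})` for all `t ≥ 0`,
with `C` depending only on `η`, `a`, `M`. -/
theorem convolution_decay_estimate (η a M : ℝ) (hη : 0 < η) (ha : 0 < a) (hM : 0 < M) :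
    ∃ C > (0:ℝ), ∀ g : ℝ → ℝ, Measurable g → (∀ τ, 0 ≤ g τ) →
      (∫⁻ τ in Set.Ioi (0:ℝ), ENNReal.ofReal (g τ ^ 2)) ≤ ENNReal.ofReal M →
      ∀ t ≥ (0:ℝ),
        (∫ τ in (0:ℝ)..t, Real.exp (-η * (t - τ)) * (1 + g τ) * Real.exp (-a * τ))
          ≤ C * (Real.exp (-η * t / 2) + Real.exp (-a * t / 2)) := by
  refine ⟨3/a + 3/η + M + 1, by positivity, ?_⟩
  intro g hg hg0 hgM t ht
  have hmeasIoc : MeasurableSet (Set.Ioc (0:ℝ) t) := measurableSet_Ioc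
  set e1 := Real.exp (-η * t / 2) with he1
  set e2 := Real.exp (-a * t / 2) with he2
  have he1p : 0 < e1 := Real.exp_pos _
  have he2p : 0 < e2 := Real.exp_pos _
  -- integrability and integral bound for g² on Ioc 0 t
  have hqmeas : Measurable fun τ => g τ ^ 2 := hg.pow_const 2
  have hq0 : ∀ τ, 0 ≤ g τ ^ 2 := fun τ => sq_nonneg _
  have hlt : (∫⁻ τ in Set.Ioc (0:ℝ) t, ENNReal.ofReal (g τ ^ 2)) ≤ ENNReal.ofReal M :=
    le_trans (lintegral_mono' (Measure.restrict_mono (fun x hx => hx.1) le_rfl) le_rfl) hgM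
  have hqint : IntegrableOn (fun τ => g τ ^ 2) (Set.Ioc 0 t) := by
    refine ⟨hqmeas.aestronglyMeasurable, ?_⟩
    rw [hasFiniteIntegral_iff_ofReal (Filter.Eventually.of_forall hq0)]
    exact lt_of_le_of_lt hlt ENNReal.ofReal_lt_top
  have hqM : (∫ τ in Set.Ioc (0:ℝ) t, g τ ^ 2) ≤ M := by
    rw [integral_eq_lintegral_of_nonneg_ae (Filter.Eventually.of_forall hq0)
      hqmeas.aestronglyMeasurable]
    calc (∫⁻ τ in Set.Ioc (0:ℝ) t, ENNReal.ofReal (g τ ^ 2)).toReal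
        ≤ (ENNReal.ofReal M).toReal := ENNReal.toReal_mono ENNReal.ofReal_ne_top hlt
      _ = M := ENNReal.toReal_ofReal hM.le
  -- the two comparison functions
  set φA : ℝ → ℝ := fun τ => Real.exp (-(a/2) * τ) with hφA
  set φB : ℝ → ℝ := fun τ => Real.exp (-(η/2) * (t - τ)) with hφB
  have hφAc : Continuous φA :=
    Real.continuous_exp.comp (continuous_const.mul continuous_id)
  have hφBc : Continuous φB :=
    Real.continuous_exp.comp (continuous_const.mul (continuous_const.sub continuous_id))
  have hφA0 : ∀ τ, 0 ≤ φA τ := fun τ => (Real.exp_pos _).le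
  have hφB0 : ∀ τ, 0 ≤ φB τ := fun τ => (Real.exp_pos _).le
  have hφA1 : ∀ τ ∈ Set.Ioc (0:ℝ) t, φA τ ≤ 1 := by
    intro τ hτ
    exact Real.exp_le_one_iff.mpr (by nlinarith [hτ.1])
  have hφB1 : ∀ τ ∈ Set.Ioc (0:ℝ) t, φB τ ≤ 1 := by
    intro τ hτ
    exact Real.exp_le_one_iff.mpr (by nlinarith [hτ.2])
  have hAI : (∫ τ in Set.Ioc (0:ℝ) t, φA τ) ≤ 2 / a := by
    have := cde_exp_Ioc (a/2) t (by positivity) ht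
    have h2 : (1:ℝ) / (a/2) = 2 / a := by field_simp
    rw [h2] at this
    exact this
  have hBI : (∫ τ in Set.Ioc (0:ℝ) t, φB τ) ≤ 2 / η := by
    rw [← intervalIntegral.integral_of_le ht]
    have hcs := intervalIntegral.integral_comp_sub_left
      (a := (0:ℝ)) (b := t) (fun x => Real.exp (-(η/2) * x)) t
    simp only [hφA, hφB] at hcs ⊢
    rw [hcs]
    simp only [sub_self, sub_zero]
    rw [intervalIntegral.integral_of_le ht]
    have := cde_exp_Ioc (η/2) t (by positivity) ht
    have h2 : (1:ℝ) / (η/2) = 2 / η := by field_simp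
    rw [h2] at this
    exact this
  obtain ⟨hAint, hAle⟩ := cde_aux_piece t M (2/a) φA (fun τ => g τ ^ 2) hφAc hφA0 hφA1
    hqint hq0 hqM hAI
  obtain ⟨hBint, hBle⟩ := cde_aux_piece t M (2/η) φB (fun τ => g τ ^ 2) hφBc hφB0 hφB1
    hqint hq0 hqM hBI
  -- pointwise bound
  have hmono : ∀ τ ∈ Set.Ioc (0:ℝ) t,
      Real.exp (-η * (t - τ)) * (1 + g τ) * Real.exp (-a * τ)
        ≤ e1 * (φA τ * (3/2 + g τ ^ 2 / 2)) + e2 * (φB τ * (3/2 + g τ ^ 2 / 2)) := by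
    intro τ hτ
    have hτ0 : 0 < τ := hτ.1
    have hτt : τ ≤ t := hτ.2
    have hg1 : 1 + g τ ≤ 3/2 + g τ ^ 2 / 2 := by nlinarith [sq_nonneg (g τ - 1)]
    have hgpos : 0 ≤ 1 + g τ := by linarith [hg0 τ]
    have key : Real.exp (-η * (t - τ)) * Real.exp (-a * τ) ≤ e1 * φA τ + e2 * φB τ := by
      rcases le_total τ (t/2) with h | h
      · have h1 : Real.exp (-η * (t - τ)) ≤ e1 :=
          Real.exp_le_exp.mpr (by nlinarith)
        have h2 : Real.exp (-a * τ) ≤ φA τ :=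
          Real.exp_le_exp.mpr (by nlinarith)
        have hm : Real.exp (-η * (t - τ)) * Real.exp (-a * τ) ≤ e1 * φA τ :=
          mul_le_mul h1 h2 (Real.exp_pos _).le he1p.le
        nlinarith [mul_pos he2p (Real.exp_pos (-(η/2) * (t - τ)))]
      · have h1 : Real.exp (-a * τ) ≤ e2 :=
          Real.exp_le_exp.mpr (by nlinarith)
        have h2 : Real.exp (-η * (t - τ)) ≤ φB τ :=
          Real.exp_le_exp.mpr (by nlinarith)
        have hm : Real.exp (-η * (t - τ)) * Real.exp (-a * τ) ≤ e2 * φB τ := by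
          calc Real.exp (-η * (t - τ)) * Real.exp (-a * τ) ≤ φB τ * e2 :=
                mul_le_mul h2 h1 (Real.exp_pos _).le (hφB0 τ)
            _ = e2 * φB τ := mul_comm _ _
        nlinarith [mul_pos he1p (Real.exp_pos (-(a/2) * τ))]
    calc Real.exp (-η * (t - τ)) * (1 + g τ) * Real.exp (-a * τ)
        = (Real.exp (-η * (t - τ)) * Real.exp (-a * τ)) * (1 + g τ) := by ring
      _ ≤ (e1 * φA τ + e2 * φB τ) * (3/2 + g τ ^ 2 / 2) := by
          refine mul_le_mul key hg1 hgpos ?_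
          positivity
      _ = e1 * (φA τ * (3/2 + g τ ^ 2 / 2)) + e2 * (φB τ * (3/2 + g τ ^ 2 / 2)) := by ring
  -- integrability of both sides
  have hRHSint : IntegrableOn
      (fun τ => e1 * (φA τ * (3/2 + g τ ^ 2 / 2)) + e2 * (φB τ * (3/2 + g τ ^ 2 / 2)))
      (Set.Ioc 0 t) := (hAint.const_mul e1).add (hBint.const_mul e2)
  have hLHSmeas : AEStronglyMeasurable
      (fun τ => Real.exp (-η * (t - τ)) * (1 + g τ) * Real.exp (-a * τ))
      (volume.restrict (Set.Ioc 0 t)) := by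
    have m1 : Measurable fun τ : ℝ => Real.exp (-η * (t - τ)) :=
      Real.measurable_exp.comp ((measurable_const.sub measurable_id).const_mul (-η))
    have m2 : Measurable fun τ : ℝ => 1 + g τ := measurable_const.add hg
    have m3 : Measurable fun τ : ℝ => Real.exp (-a * τ) :=
      Real.measurable_exp.comp (measurable_id.const_mul (-a))
    exact ((m1.mul m2).mul m3).aestronglyMeasurable
  have hLHSint : IntegrableOn
      (fun τ => Real.exp (-η * (t - τ)) * (1 + g τ) * Real.exp (-a * τ))
      (Set.Ioc 0 t) := by
    refine Integrable.mono hRHSint hLHSmeas ?_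
    rw [ae_restrict_iff' hmeasIoc]
    filter_upwards with τ hτ
    have h1 := hmono τ hτ
    have h2 : 0 ≤ Real.exp (-η * (t - τ)) * (1 + g τ) * Real.exp (-a * τ) := by
      have := hg0 τ
      positivity
    rw [Real.norm_eq_abs, Real.norm_eq_abs, abs_of_nonneg h2, abs_of_nonneg (le_trans h2 h1)]
    exact h1
  rw [intervalIntegral.integral_of_le ht]
  calc (∫ τ in Set.Ioc (0:ℝ) t, Real.exp (-η * (t - τ)) * (1 + g τ) * Real.exp (-a * τ))
      ≤ ∫ τ in Set.Ioc (0:ℝ) t,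
          (e1 * (φA τ * (3/2 + g τ ^ 2 / 2)) + e2 * (φB τ * (3/2 + g τ ^ 2 / 2))) :=
        setIntegral_mono_on hLHSint hRHSint hmeasIoc hmono
    _ = e1 * (∫ τ in Set.Ioc (0:ℝ) t, φA τ * (3/2 + g τ ^ 2 / 2))
        + e2 * (∫ τ in Set.Ioc (0:ℝ) t, φB τ * (3/2 + g τ ^ 2 / 2)) := by
        rw [integral_add (hAint.const_mul e1) (hBint.const_mul e2),
          integral_const_mul, integral_const_mul]
    _ ≤ e1 * (3/2 * (2/a) + M/2) + e2 * (3/2 * (2/η) + M/2) := by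
        have g1 := mul_le_mul_of_nonneg_left hAle he1p.le
        have g2 := mul_le_mul_of_nonneg_left hBle he2p.le
        linarith
    _ ≤ (3/a + 3/η + M + 1) * (e1 + e2) := by
        have c1 : 3/2 * (2/a) + M/2 ≤ 3/a + 3/η + M + 1 := by
          have : (3:ℝ)/2 * (2/a) = 3/a := by field_simp
          rw [this]
          have hη3 : 0 < 3/η := by positivity
          linarith
        have c2 : 3/2 * (2/η) + M/2 ≤ 3/a + 3/η + M + 1 := by
          have : (3:ℝ)/2 * (2/η) = 3/η := by field_simp
          rw [this]
          have ha3 : 0 < 3/a := by positivity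
          linarith
        nlinarith [mul_le_mul_of_nonneg_left c1 he1p.le, mul_le_mul_of_nonneg_left c2 he2p.le]
end
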